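/- For every ε > 0, h > 0 and every stopping time τ₀ ∈ 𝒯, one has |Y_{τ₀} − E[U(ρ_h(τ₀), τ₀) | 𝓕_{τ₀}]| ≤ 3 r(h) + ε almost surely, where Y_{τ₀} := ess sup_{σ∈𝒯_{τ₀}} E[U(σ, τ₀) | 𝓕_{τ₀}]. -/

import Mathlib

/-!
Common setup for "On the non-zero-sum stopping game ending at the maximum of the stopping
strategies".  Time is indexed by `[0,∞] = ℝ≥0∞`.  Since `Ω` is at most countable and `ℙ`
charges every point, essential suprema/infima over families of stopping times coincide with
the pointwise ones, which is how they are formalized below.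
-/

open MeasureTheory Filter Set
open scoped ENNReal Topology

noncomputable section

namespace StoppingGames

variable {Ω : Type*} [mΩ : MeasurableSpace Ω]

/-- `|a - b|` on `[0,∞]`, via truncated subtraction. -/
def dd (a b : ℝ≥0∞) : ℝ≥0∞ := (a - b) + (b - a)

/-- `𝒯`, the set of stopping times with values in `[0,∞]`. -/
def ST (𝓕 : Filtration ℝ≥0∞ mΩ) : Set (Ω → ℝ≥0∞) := {τ | IsStoppingTime 𝓕 (fun ω => (τ ω : WithTop ℝ≥0∞))}

/-- `𝒯_σ`, the stopping times no less than `σ`. -/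
def STge (𝓕 : Filtration ℝ≥0∞ mΩ) (σ : Ω → ℝ≥0∞) : Set (Ω → ℝ≥0∞) :=
  {τ | IsStoppingTime 𝓕 (fun ω => (τ ω : WithTop ℝ≥0∞)) ∧ ∀ ω, σ ω ≤ τ ω}

/-- `𝒯_{t+}`, the stopping times strictly greater than `t`. -/
def STgt (𝓕 : Filtration ℝ≥0∞ mΩ) (t : ℝ≥0∞) : Set (Ω → ℝ≥0∞) :=
  {τ | IsStoppingTime 𝓕 (fun ω => (τ ω : WithTop ℝ≥0∞)) ∧ ∀ ω, t < τ ω}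

/-- The class `𝕋` of jointly measurable maps `φ : [0,∞] × Ω → [0,∞]` with
`φ(t,·) ∈ 𝒯_{t+}` for every finite `t`. -/
def IsTT (𝓕 : Filtration ℝ≥0∞ mΩ) (φ : ℝ≥0∞ → Ω → ℝ≥0∞) : Prop :=
  Measurable (Function.uncurry φ) ∧ ∀ t : ℝ≥0∞, t ≠ ∞ → φ t ∈ STgt 𝓕 t

/-- A stopping strategy `ρ = (ρ₀, ρ₁) ∈ 𝔗`. -/
def IsStrategy (𝓕 : Filtration ℝ≥0∞ mΩ) (ρ : (Ω → ℝ≥0∞) × (ℝ≥0∞ → Ω → ℝ≥0∞)) : Prop :=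
  IsStoppingTime 𝓕 (fun ω => (ρ.1 ω : WithTop ℝ≥0∞)) ∧ IsTT 𝓕 ρ.2

/-- `𝔗_σ`, the stopping strategies whose first component is `≥ σ`. -/
def IsStrategyGe (𝓕 : Filtration ℝ≥0∞ mΩ) (σ : Ω → ℝ≥0∞)
    (ρ : (Ω → ℝ≥0∞) × (ℝ≥0∞ → Ω → ℝ≥0∞)) : Prop :=
  IsStrategy 𝓕 ρ ∧ ∀ ω, σ ω ≤ ρ.1 ω

/-- `ρ[τ] = ρ₀ 1_{ρ₀ ≤ τ₀} + ρ₁(τ₀) 1_{ρ₀ > τ₀}`. -/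
def play (ρ τ : (Ω → ℝ≥0∞) × (ℝ≥0∞ → Ω → ℝ≥0∞)) : Ω → ℝ≥0∞ := fun ω =>
  if ρ.1 ω ≤ τ.1 ω then ρ.1 ω else ρ.2 (τ.1 ω) ω

/-- `u(ρ,τ) = E[U(ρ[τ], τ[ρ])]`. -/
def payoff (μ : Measure Ω) (U : ℝ≥0∞ → ℝ≥0∞ → Ω → ℝ)
    (ρ τ : (Ω → ℝ≥0∞) × (ℝ≥0∞ → Ω → ℝ≥0∞)) : ℝ :=
  ∫ ω, U (play ρ τ ω) (play τ ρ ω) ω ∂μ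

/-- `u_σ(ρ,τ) = E[U(ρ[τ], τ[ρ]) | m]`. -/
def condPayoff (μ : Measure Ω) (m : MeasurableSpace Ω) (U : ℝ≥0∞ → ℝ≥0∞ → Ω → ℝ)
    (ρ τ : (Ω → ℝ≥0∞) × (ℝ≥0∞ → Ω → ℝ≥0∞)) : Ω → ℝ :=
  μ[fun ω => U (play ρ τ ω) (play τ ρ ω) ω | m]

/-- The grid point `n·h ∈ [0,∞]`. -/
def grid (h : ℝ) (n : ℕ) : ℝ≥0∞ := ENNReal.ofReal (n * h)

/-- `⌊t/h⌋ + 1`. -/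
def gridIdx (h : ℝ) (t : ℝ≥0∞) : ℕ := ⌊t.toReal / h⌋₊ + 1

/-- `ρ_h(t) := ρ̄((⌊t/h⌋+1)h)` for finite `t`, and `ρ_h(∞) := ∞`. -/
def gridStrat (h : ℝ) (bar : ℕ → Ω → ℝ≥0∞) : ℝ≥0∞ → Ω → ℝ≥0∞ := fun t ω =>
  if t = ∞ then ∞ else bar (gridIdx h t) ω

/-- Evaluation `φ(σ) : ω ↦ φ(σ(ω), ω)` of a time-indexed family along a random time. -/
def evalAt (φ : ℝ≥0∞ → Ω → ℝ≥0∞) (σ : Ω → ℝ≥0∞) : Ω → ℝ≥0∞ := fun ω => φ (σ ω) ω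

/-- `X_t = ess inf_{σ ∈ 𝒯_t} E[U(t,σ) | 𝓕_t]` (pointwise infimum, which coincides with the
essential one since `Ω` is countable and every point is charged). -/
def X1v (μ : Measure Ω) (𝓕 : Filtration ℝ≥0∞ mΩ) (U : ℝ≥0∞ → ℝ≥0∞ → Ω → ℝ)
    (t : ℝ≥0∞) (ω : Ω) : ℝ :=
  ⨅ σ : STge 𝓕 (fun _ => t), (μ[fun ω' => U t (σ.1 ω') ω' | 𝓕 t]) ω

/-- `Y_t = ess sup_{σ ∈ 𝒯_t} E[U(σ,t) | 𝓕_t]`. -/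
def Y1v (μ : Measure Ω) (𝓕 : Filtration ℝ≥0∞ mΩ) (U : ℝ≥0∞ → ℝ≥0∞ → Ω → ℝ)
    (t : ℝ≥0∞) (ω : Ω) : ℝ :=
  ⨆ σ : STge 𝓕 (fun _ => t), (μ[fun ω' => U (σ.1 ω') t ω' | 𝓕 t]) ω

/-- Player 2: `X²_t = ess sup_{σ ∈ 𝒯_t} E[U²(t,σ) | 𝓕_t]`. -/
def X2v (μ : Measure Ω) (𝓕 : Filtration ℝ≥0∞ mΩ) (U : ℝ≥0∞ → ℝ≥0∞ → Ω → ℝ)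
    (t : ℝ≥0∞) (ω : Ω) : ℝ :=
  ⨆ σ : STge 𝓕 (fun _ => t), (μ[fun ω' => U t (σ.1 ω') ω' | 𝓕 t]) ω

/-- Player 2: `Y²_t = ess inf_{σ ∈ 𝒯_t} E[U²(σ,t) | 𝓕_t]`. -/
def Y2v (μ : Measure Ω) (𝓕 : Filtration ℝ≥0∞ mΩ) (U : ℝ≥0∞ → ℝ≥0∞ → Ω → ℝ)
    (t : ℝ≥0∞) (ω : Ω) : ℝ :=
  ⨅ σ : STge 𝓕 (fun _ => t), (μ[fun ω' => U (σ.1 ω') t ω' | 𝓕 t]) ω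

/-- `Z_t = U(t,t)`. -/
def Zv (U : ℝ≥0∞ → ℝ≥0∞ → Ω → ℝ) : ℝ≥0∞ → Ω → ℝ := fun t ω => U t t ω

/-- `X_{ρ₀} 1_{ρ₀ < τ₀} + Y_{τ₀} 1_{ρ₀ > τ₀} + Z_{ρ₀} 1_{ρ₀ = τ₀}`. -/
def dynkinKernel (X Y Z : ℝ≥0∞ → Ω → ℝ) (ρ₀ τ₀ : Ω → ℝ≥0∞) (ω : Ω) : ℝ :=
  if ρ₀ ω < τ₀ ω then X (ρ₀ ω) ω else if τ₀ ω < ρ₀ ω then Y (τ₀ ω) ω else Z (ρ₀ ω) ω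

/-- The Dynkin-game payoff `V(ρ₀,τ₀)`. -/
def dynkinV (μ : Measure Ω) (X Y Z : ℝ≥0∞ → Ω → ℝ) (ρ₀ τ₀ : Ω → ℝ≥0∞) : ℝ :=
  ∫ ω, dynkinKernel X Y Z ρ₀ τ₀ ω ∂μ

/-- The conditional Dynkin-game payoff. -/
def condDynkin (μ : Measure Ω) (m : MeasurableSpace Ω) (X Y Z : ℝ≥0∞ → Ω → ℝ)
    (ρ₀ τ₀ : Ω → ℝ≥0∞) : Ω → ℝ :=
  μ[fun ω => dynkinKernel X Y Z ρ₀ τ₀ ω | m]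

/-- `v_t¹`, the (sup-inf) value of the conditional Dynkin game `G_t¹` with payoffs
`(X¹, Y¹, Z¹)` built from `U¹`. -/
def v1v (μ : Measure Ω) (𝓕 : Filtration ℝ≥0∞ mΩ) (U : ℝ≥0∞ → ℝ≥0∞ → Ω → ℝ)
    (t : ℝ≥0∞) (ω : Ω) : ℝ :=
  ⨆ ρ₀ : STge 𝓕 (fun _ => t), ⨅ τ₀ : STge 𝓕 (fun _ => t),
    condDynkin μ (𝓕 t) (X1v μ 𝓕 U) (Y1v μ 𝓕 U) (Zv U) ρ₀.1 τ₀.1 ω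

/-- `v_t²`, the (inf-sup) value of the conditional Dynkin game `G_t²` with payoffs
`(X², Y², Z²)` built from `U²`. -/
def v2v (μ : Measure Ω) (𝓕 : Filtration ℝ≥0∞ mΩ) (U : ℝ≥0∞ → ℝ≥0∞ → Ω → ℝ)
    (t : ℝ≥0∞) (ω : Ω) : ℝ :=
  ⨅ ρ₀ : STge 𝓕 (fun _ => t), ⨆ τ₀ : STge 𝓕 (fun _ => t),
    condDynkin μ (𝓕 t) (X2v μ 𝓕 U) (Y2v μ 𝓕 U) (Zv U) ρ₀.1 τ₀.1 ω

/-- `W_t¹ = E[U¹(t, τ_h²(t)) | 𝓕_t]`. -/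
def W1v (μ : Measure Ω) (𝓕 : Filtration ℝ≥0∞ mΩ) (U : ℝ≥0∞ → ℝ≥0∞ → Ω → ℝ)
    (h : ℝ) (bar : ℕ → Ω → ℝ≥0∞) (t : ℝ≥0∞) (ω : Ω) : ℝ :=
  (μ[fun ω' => U t (gridStrat h bar t ω') ω' | 𝓕 t]) ω

/-- `W_t² = E[U²(ρ_h¹(t), t) | 𝓕_t]`. -/
def W2v (μ : Measure Ω) (𝓕 : Filtration ℝ≥0∞ mΩ) (U : ℝ≥0∞ → ℝ≥0∞ → Ω → ℝ)
    (h : ℝ) (bar : ℕ → Ω → ℝ≥0∞) (t : ℝ≥0∞) (ω : Ω) : ℝ :=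
  (μ[fun ω' => U (gridStrat h bar t ω') t ω' | 𝓕 t]) ω

/-- `μ₁ = inf {t ≥ 0 : v_t¹ ≤ W_t¹ + ε}`. -/
def mu1T (μ : Measure Ω) (𝓕 : Filtration ℝ≥0∞ mΩ) (U : ℝ≥0∞ → ℝ≥0∞ → Ω → ℝ)
    (h ε : ℝ) (bar : ℕ → Ω → ℝ≥0∞) : Ω → ℝ≥0∞ := fun ω =>
  sInf {t | v1v μ 𝓕 U t ω ≤ W1v μ 𝓕 U h bar t ω + ε}

/-- `μ₂ = inf {t ≥ 0 : v_t² ≤ W_t² + ε}`. -/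
def mu2T (μ : Measure Ω) (𝓕 : Filtration ℝ≥0∞ mΩ) (U : ℝ≥0∞ → ℝ≥0∞ → Ω → ℝ)
    (h ε : ℝ) (bar : ℕ → Ω → ℝ≥0∞) : Ω → ℝ≥0∞ := fun ω =>
  sInf {t | v2v μ 𝓕 U t ω ≤ W2v μ 𝓕 U h bar t ω + ε}

/-- `ρ̄(nh)` is a family of `ε`-optimizers for `Y¹_{nh}`:
`E[U(ρ̄(nh), nh) | 𝓕_{nh}] ≥ Y_{nh} − ε`. -/
def IsOptRho1 (μ : Measure Ω) (𝓕 : Filtration ℝ≥0∞ mΩ) (U : ℝ≥0∞ → ℝ≥0∞ → Ω → ℝ)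
    (ε h : ℝ) (bar : ℕ → Ω → ℝ≥0∞) : Prop :=
  ∀ n : ℕ, bar n ∈ STge 𝓕 (fun _ => grid h n) ∧
    ∀ᵐ ω ∂μ, Y1v μ 𝓕 U (grid h n) ω - ε ≤
      (μ[fun ω' => U (bar n ω') (grid h n) ω' | 𝓕 (grid h n)]) ω

/-- `τ̄(nh)` is a family of `ε`-optimizers for `X¹_{nh}`:
`E[U(nh, τ̄(nh)) | 𝓕_{nh}] ≤ X_{nh} + ε`. -/
def IsOptTau1 (μ : Measure Ω) (𝓕 : Filtration ℝ≥0∞ mΩ) (U : ℝ≥0∞ → ℝ≥0∞ → Ω → ℝ)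
    (ε h : ℝ) (bar : ℕ → Ω → ℝ≥0∞) : Prop :=
  ∀ n : ℕ, bar n ∈ STge 𝓕 (fun _ => grid h n) ∧
    ∀ᵐ ω ∂μ, (μ[fun ω' => U (grid h n) (bar n ω') ω' | 𝓕 (grid h n)]) ω ≤
      X1v μ 𝓕 U (grid h n) ω + ε

/-- `ρ̄²(nh)` is a family of `ε`-optimizers for `Y²_{nh}` (an essential infimum). -/
def IsOptRho2 (μ : Measure Ω) (𝓕 : Filtration ℝ≥0∞ mΩ) (U : ℝ≥0∞ → ℝ≥0∞ → Ω → ℝ)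
    (ε h : ℝ) (bar : ℕ → Ω → ℝ≥0∞) : Prop :=
  ∀ n : ℕ, bar n ∈ STge 𝓕 (fun _ => grid h n) ∧
    ∀ᵐ ω ∂μ, (μ[fun ω' => U (bar n ω') (grid h n) ω' | 𝓕 (grid h n)]) ω ≤
      Y2v μ 𝓕 U (grid h n) ω + ε

/-- `τ̄²(nh)` is a family of `ε`-optimizers for `X²_{nh}` (an essential supremum). -/
def IsOptTau2 (μ : Measure Ω) (𝓕 : Filtration ℝ≥0∞ mΩ) (U : ℝ≥0∞ → ℝ≥0∞ → Ω → ℝ)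
    (ε h : ℝ) (bar : ℕ → Ω → ℝ≥0∞) : Prop :=
  ∀ n : ℕ, bar n ∈ STge 𝓕 (fun _ => grid h n) ∧
    ∀ᵐ ω ∂μ, X2v μ 𝓕 U (grid h n) ω - ε ≤
      (μ[fun ω' => U (grid h n) (bar n ω') ω' | 𝓕 (grid h n)]) ω

/-- The standing assumptions on the filtered probability space: `ℙ` charges every point of the
(countable) `Ω`, the filtration is right continuous (usual conditions; completeness is automatic
since null sets are empty), and `𝓕 = 𝓕_∞ = ⋃_{t<∞} 𝓕_t`. -/
def UsualSetup (μ : Measure Ω) (𝓕 : Filtration ℝ≥0∞ mΩ) : Prop :=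
  (∀ ω : Ω, μ {ω} ≠ 0) ∧
  (∀ t : ℝ≥0∞, (𝓕 t : MeasurableSpace Ω) = ⨅ s ∈ Ioi t, (𝓕 s : MeasurableSpace Ω)) ∧
  ((𝓕 ∞ : MeasurableSpace Ω) = mΩ) ∧
  ((⨆ t ∈ Iio (∞ : ℝ≥0∞), (𝓕 t : MeasurableSpace Ω)) = mΩ)

/-- The standing assumptions on a payoff `U`: boundedness, `𝓕_{s∨t}`-measurability of `U(s,t)`,
and the uniform-continuity modulus `r` (bounded, nondecreasing, `r(0+) = r(0) = 0`).  Note that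
the modulus condition, being imposed on all of `[0,∞]`, encodes that the values at `∞` are the
corresponding limits. -/
def PayoffAssumption (𝓕 : Filtration ℝ≥0∞ mΩ) (U : ℝ≥0∞ → ℝ≥0∞ → Ω → ℝ)
    (r : ℝ≥0∞ → ℝ) : Prop :=
  (∃ M : ℝ, ∀ s t ω, |U s t ω| ≤ M) ∧
  (∀ s t : ℝ≥0∞, Measurable[𝓕 (s ⊔ t)] (U s t)) ∧
  Monotone r ∧ (∀ x, 0 ≤ r x) ∧ (∃ C : ℝ, ∀ x, r x ≤ C) ∧ r 0 = 0 ∧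
  Tendsto r (𝓝[>] (0 : ℝ≥0∞)) (𝓝 (0 : ℝ)) ∧
  (∀ s t s' t' : ℝ≥0∞, ∀ ω, |U s t ω - U s' t' ω| ≤ r (dd s s' + dd t t'))

/-- The values of `U` at `∞` are the limits of the values at finite times. -/
def LimitsAtInfty (U : ℝ≥0∞ → ℝ≥0∞ → Ω → ℝ) : Prop :=
  (∀ s ω, Tendsto (fun b => U s b ω) (𝓝[<] (∞ : ℝ≥0∞)) (𝓝 (U s ∞ ω))) ∧
  (∀ t ω, Tendsto (fun a => U a t ω) (𝓝[<] (∞ : ℝ≥0∞)) (𝓝 (U ∞ t ω))) ∧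
  (∀ ω, Tendsto (fun p : ℝ≥0∞ × ℝ≥0∞ => U p.1 p.2 ω)
    ((𝓝[<] (∞ : ℝ≥0∞)) ×ˢ (𝓝[<] (∞ : ℝ≥0∞))) (𝓝 (U ∞ ∞ ω)))

/-- `ess inf_{σ ∈ 𝒯_v} E[U(s,σ) | 𝓕_v]` for a stopping time `v`. -/
def XatST (μ : Measure Ω) (𝓕 : Filtration ℝ≥0∞ mΩ) (U : ℝ≥0∞ → ℝ≥0∞ → Ω → ℝ)
    {v : Ω → ℝ≥0∞} (hv : IsStoppingTime 𝓕 (fun ω => (v ω : WithTop ℝ≥0∞))) (s : ℝ≥0∞) (ω : Ω) : ℝ :=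
  ⨅ σ : STge 𝓕 v, (μ[fun ω' => U s (σ.1 ω') ω' | hv.measurableSpace]) ω

/-- `X̃_v(s) = ess inf_{σ ∈ 𝒯_v} E[U(s,σ) | 𝓕_v]` for a deterministic time `v`. -/
def Xat (μ : Measure Ω) (𝓕 : Filtration ℝ≥0∞ mΩ) (U : ℝ≥0∞ → ℝ≥0∞ → Ω → ℝ)
    (v s : ℝ≥0∞) (ω : Ω) : ℝ :=
  ⨅ σ : STge 𝓕 (fun _ => v), (μ[fun ω' => U s (σ.1 ω') ω' | 𝓕 v]) ω

/-- `ρ₀* = μ₁ 1_{μ₁ ≤ μ₂} + ρ²_{μ₂+δ} 1_{μ₁ > μ₂}`. -/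
def rhoStar0 (m1 m2 rsad2 : Ω → ℝ≥0∞) : Ω → ℝ≥0∞ := fun ω =>
  if m1 ω ≤ m2 ω then m1 ω else rsad2 ω

/-- `ρ₁*(t) = ρ_h²(t)` if `t ≥ μ₁ ∧ μ₂ + δ` and `μ₁ > μ₂`, else `ρ_h¹(t)`. -/
def rhoStar1 (m1 m2 : Ω → ℝ≥0∞) (δ : ℝ) (φ1 φ2 : ℝ≥0∞ → Ω → ℝ≥0∞) :
    ℝ≥0∞ → Ω → ℝ≥0∞ := fun t ω =>
  if (m1 ω ⊓ m2 ω) + ENNReal.ofReal δ ≤ t ∧ m2 ω < m1 ω then φ2 t ω else φ1 t ω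

/-- `τ₀* = τ¹_{μ₁+δ} 1_{μ₁ ≤ μ₂} + μ₂ 1_{μ₁ > μ₂}`. -/
def tauStar0 (m1 m2 tsad1 : Ω → ℝ≥0∞) : Ω → ℝ≥0∞ := fun ω =>
  if m1 ω ≤ m2 ω then tsad1 ω else m2 ω

/-- `τ₁*(t) = τ_h¹(t)` if `t ≥ μ₁ ∧ μ₂ + δ` and `μ₁ ≤ μ₂`, else `τ_h²(t)`. -/
def tauStar1 (m1 m2 : Ω → ℝ≥0∞) (δ : ℝ) (ψ1 ψ2 : ℝ≥0∞ → Ω → ℝ≥0∞) :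
    ℝ≥0∞ → Ω → ℝ≥0∞ := fun t ω =>
  if (m1 ω ⊓ m2 ω) + ENNReal.ofReal δ ≤ t ∧ m1 ω ≤ m2 ω then ψ1 t ω else ψ2 t ω

/-!
`ρ = ρ_h(τ₀)` is a stopping time `≥ τ₀`, which gives `E[U(ρ, τ₀) | 𝓕_{τ₀}] ≤ Y_{τ₀}`.
Conversely let `ν = (⌊τ₀/h⌋ + 1)h`, a stopping time with `τ₀ ≤ ν ≤ τ₀ + h` taking values in the
grid, and let `σ ≥ τ₀` be a stopping time. Moving the two time arguments of `U` by at most `h`,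
one at a time, costs `2r(h)`, so `E[U(σ, τ₀) | 𝓕_{τ₀}] ≤ E[U(σ ∨ ν, ν) | 𝓕_{τ₀}] + 2r(h)`.
On `{ν = nh}` the conditional expectation given `𝓕_ν` is the one given `𝓕_{nh}`, and there
`ρ = ρ̄(nh)` is an `ε`-optimizer for `Y_{nh}`; hence `E[U(σ ∨ ν, ν) | 𝓕_ν] ≤ E[U(ρ, ν) | 𝓕_ν] + ε`.
Conditioning on `𝓕_{τ₀}` and moving `ν` back to `τ₀` for another `r(h)` gives `3r(h) + ε`.
-/

theorem dd_self (a : ℝ≥0∞) : dd a a = 0 := by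
  simp [dd]

theorem dd_comm (a b : ℝ≥0∞) : dd a b = dd b a :=
  add_comm _ _

theorem dd_le_of_le_of_le_add {a b δ : ℝ≥0∞} (hab : a ≤ b) (hb : b ≤ a + δ) : dd a b ≤ δ := by
  rw [dd, tsub_eq_zero_of_le hab, zero_add]
  exact tsub_le_iff_left.2 hb

section Modulus

variable {α : Type*} {U : ℝ≥0∞ → ℝ≥0∞ → α → ℝ} {r : ℝ≥0∞ → ℝ}

theorem le_add_of_dd_left_le (hr : Monotone r)
    (hmod : ∀ s t s' t' ω, |U s t ω - U s' t' ω| ≤ r (dd s s' + dd t t'))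
    {s s' δ : ℝ≥0∞} (hs : dd s s' ≤ δ) (t : ℝ≥0∞) (ω : α) : U s t ω ≤ U s' t ω + r δ := by
  have := (abs_le.1 (hmod s t s' t ω)).2
  rw [dd_self, add_zero] at this
  linarith [hr hs]

theorem le_add_of_dd_right_le (hr : Monotone r)
    (hmod : ∀ s t s' t' ω, |U s t ω - U s' t' ω| ≤ r (dd s s' + dd t t'))
    {t t' δ : ℝ≥0∞} (ht : dd t t' ≤ δ) (s : ℝ≥0∞) (ω : α) : U s t ω ≤ U s t' ω + r δ := by
  have := (abs_le.1 (hmod s t s t' ω)).2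
  rw [dd_self, zero_add] at this
  linarith [hr ht]

end Modulus

section ChargedPoints

variable {α : Type*} {m m₀ : MeasurableSpace α} {μ : Measure α} {f g : α → ℝ}

theorem forall_of_ae_of_measure_singleton_ne_zero (hμ : ∀ ω, μ {ω} ≠ 0) {p : α → Prop}
    (h : ∀ᵐ ω ∂μ, p ω) (ω : α) : p ω := by
  by_contra hω
  exact hμ ω (measure_mono_null (singleton_subset_iff.2 hω) (ae_iff.1 h))

theorem abs_condExp_apply_le (hμ : ∀ ω, μ {ω} ≠ 0) {R : ℝ} (hf : ∀ ω, |f ω| ≤ R) (ω : α) :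
    |μ[f | m] ω| ≤ R :=
  forall_of_ae_of_measure_singleton_ne_zero hμ
    (ae_bdd_abs_condExp_of_ae_bdd_abs (Eventually.of_forall hf)) ω

theorem bddAbove_range_condExp_apply (hμ : ∀ ω, μ {ω} ≠ 0) {ι : Type*} {F : ι → α → ℝ}
    {R : ℝ} (hF : ∀ i ω, |F i ω| ≤ R) (ω : α) :
    BddAbove (range fun i => μ[F i | m] ω) :=
  ⟨R, by
    rintro _ ⟨i, rfl⟩
    exact (le_abs_self _).trans (abs_condExp_apply_le hμ (hF i) ω)⟩

theorem condExp_apply_eq_of_eqOn (hμ : ∀ ω, μ {ω} ≠ 0) (hm : m ≤ m₀) (hf : Integrable f μ)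
    (hg : Integrable g μ) {s : Set α} (hs : MeasurableSet[m] s) (hfg : EqOn f g s) {ω : α}
    (hω : ω ∈ s) : μ[f | m] ω = μ[g | m] ω := by
  have hsub : f - g =ᵐ[μ.restrict s] 0 :=
    ae_restrict_of_forall_mem (hm s hs) fun x hx => sub_eq_zero.2 (hfg hx)
  have h : ∀ᵐ x ∂μ.restrict s, μ[f | m] x = μ[g | m] x := by
    filter_upwards [condExp_ae_eq_restrict_zero hs hsub,
      ae_restrict_of_ae (condExp_sub hf hg m)] with x hzero hsub
    rw [hsub, Pi.sub_apply] at hzero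
    exact sub_eq_zero.1 hzero
  exact forall_of_ae_of_measure_singleton_ne_zero hμ ((ae_restrict_iff' (hm s hs)).1 h) ω hω

theorem condExp_le_add_const [IsFiniteMeasure μ] (hm : m ≤ m₀) (hf : Integrable f μ)
    (hg : Integrable g μ) {c : ℝ} (hfg : ∀ᵐ ω ∂μ, f ω ≤ g ω + c) :
    ∀ᵐ ω ∂μ, μ[f | m] ω ≤ μ[g | m] ω + c := by
  filter_upwards [condExp_mono (m := m) hf (hg.add (integrable_const c)) hfg,
    condExp_add hg (integrable_const c) m] with ω hmono hadd
  rwa [hadd, Pi.add_apply, condExp_const hm] at hmono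

end ChargedPoints

section CountableStoppingTimes

variable [Countable Ω] {𝓕 : Filtration ℝ≥0∞ mΩ} {τ : Ω → ℝ≥0∞}

theorem measurableSet_eq_of_isStoppingTime
    (hτ : IsStoppingTime 𝓕 fun ω => (τ ω : WithTop ℝ≥0∞)) (a : ℝ≥0∞) :
    MeasurableSet[𝓕 a] {ω | τ ω = a} := by
  simpa only [WithTop.coe_eq_coe] using hτ.measurableSet_eq_of_countable_range (countable_range _) a

theorem measurableSet_lt_of_isStoppingTime
    (hτ : IsStoppingTime 𝓕 fun ω => (τ ω : WithTop ℝ≥0∞)) (a : ℝ≥0∞) :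
    MeasurableSet[𝓕 a] {ω | τ ω < a} := by
  simpa only [WithTop.coe_lt_coe] using hτ.measurableSet_lt_of_countable_range (countable_range _) a

theorem measurable_apply_apply_of_measurableSet_eq {α β γ : Type*} [MeasurableSpace γ]
    {F : α → β → Ω → γ} (hF : ∀ a b, Measurable (F a b)) {f : Ω → α} {g : Ω → β}
    (hf : ∀ a, MeasurableSet {ω | f ω = a}) (hg : ∀ b, MeasurableSet {ω | g ω = b}) :
    Measurable fun ω => F (f ω) (g ω) ω := by
  intro S hS
  have : (fun ω => F (f ω) (g ω) ω) ⁻¹' S =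
      ⋃ ω₀, {ω | f ω = f ω₀} ∩ {ω | g ω = g ω₀} ∩ F (f ω₀) (g ω₀) ⁻¹' S := by
    ext ω
    simp only [mem_preimage, mem_iUnion, mem_inter_iff, mem_ofPred_eq]
    constructor
    · exact fun hω => ⟨ω, ⟨rfl, rfl⟩, hω⟩
    · rintro ⟨ω₀, ⟨hfω, hgω⟩, hω⟩
      rwa [hfω, hgω]
  rw [this]
  exact .iUnion fun ω₀ => ((hf _).inter (hg _)).inter (hF _ _ hS)

theorem integrable_apply_apply_of_isStoppingTime {μ : Measure Ω} [IsFiniteMeasure μ]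
    {U : ℝ≥0∞ → ℝ≥0∞ → Ω → ℝ} {R : ℝ} (hUR : ∀ s t ω, |U s t ω| ≤ R)
    (hUm : ∀ s t, Measurable (U s t)) {σ : Ω → ℝ≥0∞}
    (hσ : IsStoppingTime 𝓕 fun ω => (σ ω : WithTop ℝ≥0∞))
    (hτ : IsStoppingTime 𝓕 fun ω => (τ ω : WithTop ℝ≥0∞)) :
    Integrable (fun ω => U (σ ω) (τ ω) ω) μ :=
  (integrable_const R).mono'
    (measurable_apply_apply_of_measurableSet_eq hUm
      (fun a => 𝓕.le a _ (measurableSet_eq_of_isStoppingTime hσ a))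
      (fun b => 𝓕.le b _ (measurableSet_eq_of_isStoppingTime hτ b))).aestronglyMeasurable
    (Eventually.of_forall fun ω => hUR _ _ ω)

theorem condExp_isStoppingTime_apply {μ : Measure Ω} [IsFiniteMeasure μ]
    (hμ : ∀ ω, μ {ω} ≠ 0) {ν : Ω → ℝ≥0∞} (hν : IsStoppingTime 𝓕 fun ω => (ν ω : WithTop ℝ≥0∞))
    {f g : Ω → ℝ} (hf : Integrable f μ) (hg : Integrable g μ) {ω : Ω}
    (hfg : ∀ ω', ν ω' = ν ω → f ω' = g ω') :
    μ[f | hν.measurableSpace] ω = μ[g | 𝓕 (ν ω)] ω := by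
  have hlevel := measurableSet_eq_of_isStoppingTime hν (ν ω)
  have hstop := condExp_stopping_time_ae_eq_restrict_eq_of_countable_range (μ := μ) (f := f) hν
    (countable_range _) (ν ω)
  have hνω : μ[f | hν.measurableSpace] ω = μ[f | 𝓕 (ν ω)] ω :=
    forall_of_ae_of_measure_singleton_ne_zero hμ
      ((ae_restrict_iff' (𝓕.le _ _ (by simpa only [WithTop.coe_eq_coe] using hlevel))).1 hstop)
      ω rfl
  rw [hνω]
  exact condExp_apply_eq_of_eqOn hμ (𝓕.le _) hf hg hlevel (fun ω' hω' => hfg ω' hω') rfl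

end CountableStoppingTimes

section Grid

variable {h : ℝ} {n : ℕ} {t : ℝ≥0∞}

theorem grid_ne_top : grid h n ≠ ∞ :=
  ENNReal.ofReal_ne_top

theorem grid_succ (hh : 0 ≤ h) (n : ℕ) : grid h (n + 1) = grid h n + ENNReal.ofReal h := by
  rw [grid, grid, ← ENNReal.ofReal_add (by positivity) hh]
  push_cast
  ring_nf

theorem grid_injective (hh : 0 < h) : Function.Injective (grid h) := by
  intro m n hmn
  have := (ENNReal.ofReal_eq_ofReal_iff (by positivity) (by positivity)).1 hmn
  exact_mod_cast mul_right_cancel₀ hh.ne' this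

theorem gridIdx_eq_succ_iff (hh : 0 < h) :
    t ≠ ∞ ∧ gridIdx h t = n + 1 ↔ grid h n ≤ t ∧ t < grid h (n + 1) := by
  by_cases ht : t = ∞
  · simp [ht]
  rw [gridIdx, Nat.add_right_cancel_iff, Nat.floor_eq_iff (by positivity), le_div_iff₀ hh,
    div_lt_iff₀ hh, grid, grid, ENNReal.ofReal_le_iff_le_toReal ht,
    ENNReal.lt_ofReal_iff_toReal_lt ht]
  push_cast
  simp [ht]

theorem le_grid_gridIdx (hh : 0 < h) (ht : t ≠ ∞) : t ≤ grid h (gridIdx h t) :=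
  ((gridIdx_eq_succ_iff hh).1 ⟨ht, rfl⟩).2.le

theorem grid_gridIdx_le_add (hh : 0 < h) (ht : t ≠ ∞) :
    grid h (gridIdx h t) ≤ t + ENNReal.ofReal h := by
  rw [gridIdx, grid_succ hh.le]
  gcongr
  exact ((gridIdx_eq_succ_iff hh).1 ⟨ht, rfl⟩).1

end Grid

section GridTimes

variable {α : Type*} {h : ℝ} {τ : α → ℝ≥0∞} {bar : ℕ → α → ℝ≥0∞} {ω : α}

def nextGrid (h : ℝ) (τ : α → ℝ≥0∞) : α → ℝ≥0∞ :=
  evalAt (gridStrat h fun n _ => grid h n) τ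

theorem evalAt_gridStrat_of_ne_top (hτω : τ ω ≠ ∞) :
    evalAt (gridStrat h bar) τ ω = bar (gridIdx h (τ ω)) ω := by
  simp [evalAt, gridStrat, hτω]

theorem evalAt_gridStrat_of_eq_top (hτω : τ ω = ∞) : evalAt (gridStrat h bar) τ ω = ∞ := by
  simp [evalAt, gridStrat, hτω]

theorem le_evalAt_gridStrat (hh : 0 < h) (hbar : ∀ n ω, grid h n ≤ bar n ω) (ω : α) :
    τ ω ≤ evalAt (gridStrat h bar) τ ω := by
  by_cases hτω : τ ω = ∞
  · simp [evalAt_gridStrat_of_eq_top hτω]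
  · rw [evalAt_gridStrat_of_ne_top hτω]
    exact (le_grid_gridIdx hh hτω).trans (hbar _ ω)

theorem nextGrid_le_evalAt_gridStrat (hbar : ∀ n ω, grid h n ≤ bar n ω) (ω : α) :
    nextGrid h τ ω ≤ evalAt (gridStrat h bar) τ ω := by
  by_cases hτω : τ ω = ∞
  · simp [evalAt_gridStrat_of_eq_top hτω]
  · rw [nextGrid, evalAt_gridStrat_of_ne_top hτω, evalAt_gridStrat_of_ne_top hτω]
    exact hbar _ ω

theorem nextGrid_le_add (hh : 0 < h) (ω : α) : nextGrid h τ ω ≤ τ ω + ENNReal.ofReal h := by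
  by_cases hτω : τ ω = ∞
  · simp [hτω]
  · rw [nextGrid, evalAt_gridStrat_of_ne_top hτω]
    exact grid_gridIdx_le_add hh hτω

theorem nextGrid_eq_top_iff : nextGrid h τ ω = ∞ ↔ τ ω = ∞ := by
  by_cases hτω : τ ω = ∞
  · simp [nextGrid, evalAt_gridStrat_of_eq_top hτω, hτω]
  · simp [nextGrid, evalAt_gridStrat_of_ne_top hτω, hτω, grid_ne_top]

theorem nextGrid_eq_grid_iff (hh : 0 < h) {n : ℕ} :
    nextGrid h τ ω = grid h n ↔ τ ω ≠ ∞ ∧ gridIdx h (τ ω) = n := by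
  by_cases hτω : τ ω = ∞
  · simp [nextGrid, evalAt_gridStrat_of_eq_top hτω, hτω, grid_ne_top.symm]
  · simp [nextGrid, evalAt_gridStrat_of_ne_top hτω, hτω, (grid_injective hh).eq_iff]

end GridTimes

section GridStopping

variable [Countable Ω] {𝓕 : Filtration ℝ≥0∞ mΩ} {h : ℝ} {τ : Ω → ℝ≥0∞} {bar : ℕ → Ω → ℝ≥0∞}

theorem measurableSet_gridIdx_eq_succ (hh : 0 < h)
    (hτ : IsStoppingTime 𝓕 fun ω => (τ ω : WithTop ℝ≥0∞)) (n : ℕ) :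
    MeasurableSet[𝓕 (grid h (n + 1))] {ω | τ ω ≠ ∞ ∧ gridIdx h (τ ω) = n + 1} := by
  have : {ω | τ ω ≠ ∞ ∧ gridIdx h (τ ω) = n + 1} =
      {ω | τ ω < grid h (n + 1)} \ {ω | τ ω < grid h n} := by
    ext ω
    simp only [mem_ofPred_eq, Set.mem_sdiff, gridIdx_eq_succ_iff hh, not_lt, and_comm]
  rw [this]
  have hmono : grid h n ≤ grid h (n + 1) := by
    rw [grid_succ hh.le]
    exact le_self_add
  exact (measurableSet_lt_of_isStoppingTime hτ _).diff
    (𝓕.mono hmono _ (measurableSet_lt_of_isStoppingTime hτ _))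

theorem isStoppingTime_evalAt_gridStrat (hh : 0 < h)
    (hτ : IsStoppingTime 𝓕 fun ω => (τ ω : WithTop ℝ≥0∞))
    (hbar : ∀ n, IsStoppingTime 𝓕 fun ω => (bar n ω : WithTop ℝ≥0∞))
    (hbar_ge : ∀ n ω, grid h n ≤ bar n ω) :
    IsStoppingTime 𝓕 fun ω => (evalAt (gridStrat h bar) τ ω : WithTop ℝ≥0∞) := by
  intro s
  simp only [WithTop.coe_le_coe]
  rcases eq_or_ne s ∞ with rfl | hs
  · simp
  have : {ω | evalAt (gridStrat h bar) τ ω ≤ s} =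
      ⋃ n, {ω | τ ω ≠ ∞ ∧ gridIdx h (τ ω) = n + 1} ∩ {ω | bar (n + 1) ω ≤ s} := by
    ext ω
    simp only [mem_ofPred_eq, mem_iUnion, mem_inter_iff]
    constructor
    · intro hle
      have hτω : τ ω ≠ ∞ := fun hτω => hs (top_le_iff.1 (evalAt_gridStrat_of_eq_top hτω ▸ hle))
      rw [evalAt_gridStrat_of_ne_top hτω] at hle
      refine ⟨gridIdx h (τ ω) - 1, ⟨hτω, ?_⟩, ?_⟩ <;> simp only [gridIdx, Nat.add_sub_cancel]
      exact hle
    · rintro ⟨n, ⟨hτω, hidx⟩, hle⟩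
      rwa [evalAt_gridStrat_of_ne_top hτω, hidx]
  rw [this]
  refine .iUnion fun n => ?_
  by_cases hns : grid h (n + 1) ≤ s
  · exact (𝓕.mono hns _ (measurableSet_gridIdx_eq_succ hh hτ n)).inter
      (by simpa only [WithTop.coe_le_coe] using hbar (n + 1) s)
  · convert @MeasurableSet.empty _ (𝓕 s)
    exact eq_empty_of_forall_notMem fun ω hω => hns ((hbar_ge _ ω).trans hω.2)

theorem isStoppingTime_nextGrid (hh : 0 < h)
    (hτ : IsStoppingTime 𝓕 fun ω => (τ ω : WithTop ℝ≥0∞)) :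
    IsStoppingTime 𝓕 fun ω => (nextGrid h τ ω : WithTop ℝ≥0∞) :=
  isStoppingTime_evalAt_gridStrat hh hτ (fun n => isStoppingTime_const 𝓕 (grid h n))
    fun _ _ => le_rfl

end GridStopping

theorem condExp_le_Y1v {μ : Measure Ω} {𝓕 : Filtration ℝ≥0∞ mΩ}
    {U : ℝ≥0∞ → ℝ≥0∞ → Ω → ℝ} {R : ℝ} (hμ : ∀ ω, μ {ω} ≠ 0) (hUR : ∀ s t ω, |U s t ω| ≤ R)
    {t : ℝ≥0∞} {σ : Ω → ℝ≥0∞} (hσ : σ ∈ STge 𝓕 fun _ => t) (ω : Ω) :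
    μ[fun ω' => U (σ ω') t ω' | 𝓕 t] ω ≤ Y1v μ 𝓕 U t ω :=
  le_ciSup (bddAbove_range_condExp_apply hμ
    (F := fun σ : STge 𝓕 (fun _ => t) => fun ω' => U (σ.1 ω') t ω') (fun _ _ => hUR _ _ _) ω)
    (⟨σ, hσ⟩ : STge 𝓕 fun _ => t)

section GridEstimate

variable [Countable Ω] {μ : Measure Ω} [IsFiniteMeasure μ] {𝓕 : Filtration ℝ≥0∞ mΩ}
  {U : ℝ≥0∞ → ℝ≥0∞ → Ω → ℝ} {r : ℝ≥0∞ → ℝ} {R ε h : ℝ} {ρbar : ℕ → Ω → ℝ≥0∞} {τ σ : Ω → ℝ≥0∞}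

theorem condExp_nextGrid_apply_of_eq_top (hμ : ∀ ω, μ {ω} ≠ 0)
    (hUR : ∀ s t ω, |U s t ω| ≤ R) (hUm : ∀ s t, Measurable (U s t))
    (hν : IsStoppingTime 𝓕 fun ω => (nextGrid h τ ω : WithTop ℝ≥0∞))
    (hσ : σ ∈ STge 𝓕 (nextGrid h τ)) {ω : Ω} (hτω : τ ω = ∞) :
    μ[fun ω' => U (σ ω') (nextGrid h τ ω') ω' | hν.measurableSpace] ω =
      μ[fun ω' => U ∞ ∞ ω' | 𝓕 ∞] ω := by
  have hνω : nextGrid h τ ω = ∞ := nextGrid_eq_top_iff.2 hτω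
  rw [condExp_isStoppingTime_apply hμ hν (integrable_apply_apply_of_isStoppingTime hUR hUm hσ.1 hν)
    (integrable_apply_apply_of_isStoppingTime (τ := fun _ => ∞) hUR hUm
      (isStoppingTime_const 𝓕 ∞) (isStoppingTime_const 𝓕 ∞)), hνω]
  intro ω' hω'
  rw [hνω] at hω'
  have hσω' := hσ.2 ω'
  rw [hω', top_le_iff] at hσω'
  rw [hω', hσω']

theorem condExp_nextGrid_le_condExp_gridStrat_add (hμ : ∀ ω, μ {ω} ≠ 0)
    (hUR : ∀ s t ω, |U s t ω| ≤ R) (hUm : ∀ s t, Measurable (U s t)) (hε : 0 ≤ ε) (hh : 0 < h)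
    (hopt : IsOptRho1 μ 𝓕 U ε h ρbar) (hτ : IsStoppingTime 𝓕 fun ω => (τ ω : WithTop ℝ≥0∞))
    (hν : IsStoppingTime 𝓕 fun ω => (nextGrid h τ ω : WithTop ℝ≥0∞))
    (hσ : σ ∈ STge 𝓕 (nextGrid h τ)) (ω : Ω) :
    μ[fun ω' => U (σ ω') (nextGrid h τ ω') ω' | hν.measurableSpace] ω ≤
      μ[fun ω' => U (evalAt (gridStrat h ρbar) τ ω') (nextGrid h τ ω') ω' |
        hν.measurableSpace] ω + ε := by
  have hρ := isStoppingTime_evalAt_gridStrat hh hτ (fun n => (hopt n).1.1) fun n => (hopt n).1.2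
  have hint {a b : Ω → ℝ≥0∞} (ha : IsStoppingTime 𝓕 fun ω => (a ω : WithTop ℝ≥0∞))
      (hb : IsStoppingTime 𝓕 fun ω => (b ω : WithTop ℝ≥0∞)) :
      Integrable (fun ω => U (a ω) (b ω) ω) μ :=
    integrable_apply_apply_of_isStoppingTime hUR hUm ha hb
  by_cases hτω : τ ω = ∞
  · have hρ_ge : evalAt (gridStrat h ρbar) τ ∈ STge 𝓕 (nextGrid h τ) :=
      ⟨hρ, nextGrid_le_evalAt_gridStrat fun n => (hopt n).1.2⟩
    rw [condExp_nextGrid_apply_of_eq_top hμ hUR hUm hν hσ hτω,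
      condExp_nextGrid_apply_of_eq_top hμ hUR hUm hν hρ_ge hτω]
    linarith
  set n := gridIdx h (τ ω)
  have hνω : nextGrid h τ ω = grid h n := (nextGrid_eq_grid_iff hh).2 ⟨hτω, rfl⟩
  have hσn : (fun ω' => max (σ ω') (grid h n)) ∈ STge 𝓕 fun _ => grid h n :=
    ⟨hσ.1.max_const _, fun _ => le_max_right _ _⟩
  calc μ[fun ω' => U (σ ω') (nextGrid h τ ω') ω' | hν.measurableSpace] ω
      = μ[fun ω' => U (max (σ ω') (grid h n)) (grid h n) ω' | 𝓕 (grid h n)] ω := by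
        rw [condExp_isStoppingTime_apply hμ hν (hint hσ.1 hν)
          (hint hσn.1 (isStoppingTime_const 𝓕 _)), hνω]
        intro ω' hω'
        rw [hνω] at hω'
        rw [hω', max_eq_left (hω' ▸ hσ.2 ω')]
    _ ≤ Y1v μ 𝓕 U (grid h n) ω := condExp_le_Y1v hμ hUR hσn ω
    _ ≤ μ[fun ω' => U (ρbar n ω') (grid h n) ω' | 𝓕 (grid h n)] ω + ε := by
        linarith [forall_of_ae_of_measure_singleton_ne_zero hμ (hopt n).2 ω]
    _ = μ[fun ω' => U (evalAt (gridStrat h ρbar) τ ω') (nextGrid h τ ω') ω' |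
          hν.measurableSpace] ω + ε := by
        rw [condExp_isStoppingTime_apply hμ hν (hint hρ hν)
          (hint (hopt n).1.1 (isStoppingTime_const 𝓕 _)), hνω]
        intro ω' hω'
        rw [hνω] at hω'
        obtain ⟨hτω', hidx⟩ := (nextGrid_eq_grid_iff hh).1 hω'
        rw [hω', evalAt_gridStrat_of_ne_top hτω', hidx]


theorem condExp_le_condExp_gridStrat_add (hμ : ∀ ω, μ {ω} ≠ 0)
    (hUR : ∀ s t ω, |U s t ω| ≤ R) (hUm : ∀ s t, Measurable (U s t)) (hr : Monotone r)
    (hmod : ∀ s t s' t' ω, |U s t ω - U s' t' ω| ≤ r (dd s s' + dd t t')) (hε : 0 ≤ ε)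
    (hh : 0 < h) (hopt : IsOptRho1 μ 𝓕 U ε h ρbar)
    (hτ : IsStoppingTime 𝓕 fun ω => (τ ω : WithTop ℝ≥0∞)) (hσ : σ ∈ STge 𝓕 τ) :
    ∀ᵐ ω ∂μ, μ[fun ω' => U (σ ω') (τ ω') ω' | hτ.measurableSpace] ω ≤
      μ[fun ω' => U (evalAt (gridStrat h ρbar) τ ω') (τ ω') ω' | hτ.measurableSpace] ω +
        (3 * r (ENNReal.ofReal h) + ε) := by
  set ν := nextGrid h τ
  set ρ := evalAt (gridStrat h ρbar) τ
  set δ := ENNReal.ofReal h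
  have hν := isStoppingTime_nextGrid hh hτ
  have hρ : IsStoppingTime 𝓕 fun ω => (ρ ω : WithTop ℝ≥0∞) :=
    isStoppingTime_evalAt_gridStrat hh hτ (fun n => (hopt n).1.1) fun n => (hopt n).1.2
  have hτν : ∀ ω, τ ω ≤ ν ω := le_evalAt_gridStrat hh fun _ _ => le_rfl
  have hντ : ∀ ω, ν ω ≤ τ ω + δ := nextGrid_le_add hh
  set σ' := fun ω => max (σ ω) (ν ω)
  have hσ' : σ' ∈ STge 𝓕 ν := ⟨hσ.1.max hν, fun _ => le_max_right _ _⟩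
  have hint {a b : Ω → ℝ≥0∞} (ha : IsStoppingTime 𝓕 fun ω => (a ω : WithTop ℝ≥0∞))
      (hb : IsStoppingTime 𝓕 fun ω => (b ω : WithTop ℝ≥0∞)) :
      Integrable (fun ω => U (a ω) (b ω) ω) μ :=
    integrable_apply_apply_of_isStoppingTime hUR hUm ha hb
  have hτ_le_ν : hτ.measurableSpace ≤ hν.measurableSpace :=
    hτ.measurableSpace_mono hν fun ω => WithTop.coe_le_coe.2 (hτν ω)
  have hmove (ω : Ω) : U (σ ω) (τ ω) ω ≤ U (σ' ω) (ν ω) ω + (r δ + r δ) := by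
    have hνσ : ν ω ≤ σ ω + δ := (hντ ω).trans (by gcongr; exact hσ.2 ω)
    have hσσ' : dd (σ ω) (σ' ω) ≤ δ :=
      dd_le_of_le_of_le_add (le_max_left _ _) (max_le le_self_add hνσ)
    have hτν' : dd (τ ω) (ν ω) ≤ δ := dd_le_of_le_of_le_add (hτν ω) (hντ ω)
    linarith [le_add_of_dd_left_le hr hmod hσσ' (τ ω) ω,
      le_add_of_dd_right_le hr hmod hτν' (σ' ω) ω]
  have hback (ω : Ω) : U (ρ ω) (ν ω) ω ≤ U (ρ ω) (τ ω) ω + r δ :=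
    le_add_of_dd_right_le hr hmod
      (by rw [dd_comm]; exact dd_le_of_le_of_le_add (hτν ω) (hντ ω)) _ ω
  have hopt_ν := condExp_nextGrid_le_condExp_gridStrat_add hμ hUR hUm hε hh hopt hτ hν hσ'
  filter_upwards [
    condExp_le_add_const hτ.measurableSpace_le (hint hσ.1 hτ) (hint hσ'.1 hν) (.of_forall hmove),
    condExp_condExp_of_le (f := fun ω => U (σ' ω) (ν ω) ω) hτ_le_ν hν.measurableSpace_le,
    condExp_le_add_const hτ.measurableSpace_le integrable_condExp integrable_condExp
      (.of_forall hopt_ν),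
    condExp_condExp_of_le (f := fun ω => U (ρ ω) (ν ω) ω) hτ_le_ν hν.measurableSpace_le,
    condExp_le_add_const hτ.measurableSpace_le (hint hρ hν) (hint hρ hτ) (.of_forall hback)]
    with ω hA hB hC hD hE
  linarith

end GridEstimate

/-- the estimate in the proof of Lemma 3.2: for every `ε > 0`, `h > 0` and
every stopping time `τ₀`, `|Y_{τ₀} − E[U(ρ_h(τ₀), τ₀) | 𝓕_{τ₀}]| ≤ 3r(h) + ε` a.s. -/
theorem Y_grid_estimate [Countable Ω] (μ : Measure Ω) [IsProbabilityMeasure μ]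
    (𝓕 : Filtration ℝ≥0∞ mΩ) (hsetup : UsualSetup μ 𝓕)
    (U : ℝ≥0∞ → ℝ≥0∞ → Ω → ℝ) (r : ℝ≥0∞ → ℝ) (hU : PayoffAssumption 𝓕 U r)
    (ε h : ℝ) (hε : 0 < ε) (hh : 0 < h)
    (ρbar : ℕ → Ω → ℝ≥0∞) (hopt : IsOptRho1 μ 𝓕 U ε h ρbar)
    (τ₀ : Ω → ℝ≥0∞) (hτ₀ : IsStoppingTime 𝓕 (fun ω => (τ₀ ω : WithTop ℝ≥0∞))) :
    ∀ᵐ ω ∂μ,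
      |(⨆ σ : STge 𝓕 τ₀, (μ[fun ω' => U (σ.1 ω') (τ₀ ω') ω' | hτ₀.measurableSpace]) ω) -
        (μ[fun ω' => U (evalAt (gridStrat h ρbar) τ₀ ω') (τ₀ ω') ω' |
          hτ₀.measurableSpace]) ω|
      ≤ 3 * r (ENNReal.ofReal h) + ε := by
  obtain ⟨hμ, -, -, -⟩ := hsetup
  obtain ⟨⟨R, hUR⟩, hUm, hr, -, -, -, -, hmod⟩ := hU
  have hρ : evalAt (gridStrat h ρbar) τ₀ ∈ STge 𝓕 τ₀ :=
    ⟨isStoppingTime_evalAt_gridStrat hh hτ₀ (fun n => (hopt n).1.1) fun n => (hopt n).1.2,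
      le_evalAt_gridStrat hh fun n => (hopt n).1.2⟩
  have : Nonempty (STge 𝓕 τ₀) := ⟨⟨_, hρ⟩⟩
  refine .of_forall fun ω => abs_le.2 ?_
  have hρ_le := le_ciSup (bddAbove_range_condExp_apply hμ (m := hτ₀.measurableSpace)
    (F := fun σ : STge 𝓕 τ₀ => fun ω' => U (σ.1 ω') (τ₀ ω') ω') (fun _ _ => hUR _ _ _) ω)
    ⟨_, hρ⟩
  have hsup_le := ciSup_le fun σ : STge 𝓕 τ₀ => forall_of_ae_of_measure_singleton_ne_zero hμ
    (condExp_le_condExp_gridStrat_add hμ hUR (fun s t => (hUm s t).mono (𝓕.le _) le_rfl) hr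
      hmod hε.le hh hopt hτ₀ σ.2) ω
  constructor <;> linarith

end StoppingGames
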